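/- Define F(n) = Σ_{π ∈ S_n} q^{(b-ca)(π)}. Then for n ≥ 1, F(n) = Σ_{k=1}^{n} a(n,k) F(n−k) with F(0) = 1, where a(n,k) = Σ_{n ≥ t_1 > ⋯ > t_k ≥ 1} Π_{j=1}^{k−1} (q^{t_j − t_{j+1} − 1} − 1). -/

import Mathlib

open Finset Polynomial

/-- A permutation of `Fin n` as a word `{0,...,n-1} → {1,...,n}`. -/
def toWord (n : ℕ) (π : Equiv.Perm (Fin n)) : ℕ → ℕ :=
  fun k => if h : k < n then (π ⟨k, h⟩ : ℕ) + 1 else 0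

/-- The number of occurrences of (b-ca) in a word of length `ℓ`:
triples (j,i,i+1) with j < i and w (i+1) < w j < w i. -/
def bcaCount (w : ℕ → ℕ) (ℓ : ℕ) : ℕ :=
  ((range ℓ ×ˢ range ℓ).filter
    (fun p => p.1 < p.2 ∧ p.2 + 1 < ℓ ∧ w (p.2 + 1) < w p.1 ∧ w p.1 < w p.2)).card

/-- `F n = Σ_{π ∈ S_n} q^{(b-ca)(π)}`. -/
noncomputable def F (n : ℕ) : Polynomial ℤ :=
  ∑ π : Equiv.Perm (Fin n), (X : Polynomial ℤ) ^ bcaCount (toWord n π) n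

/-- `a n k = Σ_{n ≥ t_1 > ⋯ > t_k ≥ 1} Π_{j=1}^{k-1} (q^{t_j - t_{j+1} - 1} - 1)`; the sum
ranges over k-element subsets `S = {t_1 > ⋯ > t_k}` of `{1,...,n}`, and if `L` is `S`
sorted increasingly then `t_j = L[k-j]` (0-based). -/
noncomputable def a (n k : ℕ) : Polynomial ℤ :=
  ∑ S ∈ (Finset.Icc 1 n).powersetCard k,
    ∏ j ∈ range (k - 1),
      ((X : Polynomial ℤ) ^
        ((S.sort (· ≤ ·)).getD (k - j - 1) 0 - (S.sort (· ≤ ·)).getD (k - j - 2) 0 - 1) - 1)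

/-!
Sort permutations by their last letter `t`. Deleting the last letter and standardizing the rest
is a bijection onto `S_{n-1}`; it destroys exactly the occurrences `(j, n-1, n)`, whose letters
`π_j` lie strictly between `t` and `π_{n-1}` and become `t, …, v - 1` in the standardized word,
`v` being its last letter. So the refinement `F_n(t)` of `F(n)` by the last letter satisfies
`F_{n+1}(t) = Σ_v q^(v-t) F_n(v) = F(n) + Σ_{v ≥ t} (q^(v-t) - 1) F_n(v)`,
and unrolling this recursion shows that `F_n(t) = Σ_k A_{n,k}(t) F(n-1-k)`, where `A_{n,k}(t)` is
the part of `a(n, k+1)` coming from the sets `{t_1 > ⋯ > t_{k+1} = t}`. Summing over `t` gives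
the theorem.
-/

open Equiv

lemma bcaCount_congr {w w' : ℕ → ℕ} {ℓ : ℕ}
    (h : ∀ i < ℓ, ∀ j < ℓ, w i < w j ↔ w' i < w' j) : bcaCount w ℓ = bcaCount w' ℓ := by
  refine congrArg card (filter_congr fun p hp => ?_)
  obtain ⟨hp₁, hp₂⟩ := mem_product.1 hp
  rw [mem_range] at hp₁ hp₂
  exact and_congr_right fun _ => and_congr_right fun hi =>
    and_congr (h _ hi _ hp₁) (h _ hp₁ _ hp₂)

lemma bcaCount_eq_sum (w : ℕ → ℕ) (ℓ : ℕ) :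
    bcaCount w ℓ = ∑ i ∈ range (ℓ - 1), #{j ∈ range i | w (i + 1) < w j ∧ w j < w i} := by
  rw [bcaCount, card_filter, sum_product_right]
  refine (sum_subset (range_subset_range.2 (Nat.sub_le ℓ 1)) fun i hi hi' => ?_).symm.trans
    (sum_congr rfl fun i hi => ?_)
  · simp only [mem_range] at hi hi'
    exact sum_eq_zero fun j _ => if_neg (by omega)
  · simp only [mem_range] at hi
    rw [← card_filter]
    congr 1
    ext j
    simp only [mem_filter, mem_range]
    omega

lemma bcaCount_succ (w : ℕ → ℕ) (ℓ : ℕ) :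
    bcaCount w (ℓ + 1) = bcaCount w ℓ + #{j ∈ range ℓ | w ℓ < w j ∧ w j < w (ℓ - 1)} := by
  rcases ℓ with _ | ℓ
  · simp [bcaCount]
  rw [bcaCount_eq_sum, bcaCount_eq_sum, Nat.add_sub_cancel, Nat.add_sub_cancel, sum_range_succ]
  congr 2
  ext j
  simp only [mem_filter, mem_range]
  refine and_congr_left fun h => ⟨fun hj => hj.trans ℓ.lt_succ_self, fun hj => ?_⟩
  refine (Nat.lt_succ_iff.1 hj).lt_of_ne ?_
  rintro rfl
  exact lt_irrefl _ h.2

lemma toWord_of_lt {n k : ℕ} (π : Perm (Fin n)) (hk : k < n) : toWord n π k = π ⟨k, hk⟩ + 1 :=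
  dif_pos hk

lemma toWord_last {m : ℕ} (π : Perm (Fin (m + 1))) : toWord (m + 1) π m = π (Fin.last m) + 1 :=
  dif_pos m.lt_succ_self

lemma toWord_le (n : ℕ) (π : Perm (Fin n)) (k : ℕ) : toWord n π k ≤ n := by
  unfold toWord; split_ifs <;> omega

lemma toWord_mem_Icc {n k : ℕ} (π : Perm (Fin n)) (hk : k < n) : toWord n π k ∈ Icc 1 n := by
  rw [mem_Icc, toWord_of_lt π hk]; omega

lemma card_filter_toWord (m : ℕ) (σ : Perm (Fin m)) (P : ℕ → Prop) [DecidablePred P] :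
    #{j ∈ range m | P (toWord m σ j)} = #{x ∈ range m | P (x + 1)} := by
  simp only [card_filter, ← Fin.sum_univ_eq_sum_range]
  simp only [toWord_of_lt σ (Fin.is_lt _)]
  exact Equiv.sum_comp σ fun i : Fin m => if P (i + 1) then 1 else 0

/-- `appendLastEquiv p σ` writes the letters of `σ`, those `≥ p` raised by one, followed by `p`;
its inverse deletes the last letter and standardizes. -/
def appendLastEquiv {m : ℕ} (p : Fin (m + 1)) :
    Perm (Fin m) ≃ {π : Perm (Fin (m + 1)) // π (Fin.last m) = p} :=
  ((Equiv.refl _).equivCongr (finSuccAboveEquiv p)).trans <| (optionSubtype p).symm.trans <|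
    (finSuccEquivLast.symm.equivCongr (Equiv.refl _)).subtypeEquiv (by simp)

lemma appendLastEquiv_apply_castSucc {m : ℕ} (p : Fin (m + 1)) (σ : Perm (Fin m)) (y : Fin m) :
    (appendLastEquiv p σ : Perm (Fin (m + 1))) y.castSucc = p.succAbove (σ y) := by
  simp [appendLastEquiv, finSuccAboveEquiv_apply]

lemma sum_filter_apply_last_eq {M : Type*} [AddCommMonoid M] {m : ℕ} (p : Fin (m + 1))
    (f : Perm (Fin (m + 1)) → M) :
    ∑ π with π (Fin.last m) = p, f π = ∑ σ, f (appendLastEquiv p σ) := by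
  rw [sum_subtype _ (p := fun π => π (Fin.last m) = p) (by simp),
    (appendLastEquiv p).sum_comp (fun π => f π)]

lemma toWord_appendLast_of_lt {m k : ℕ} (p : Fin (m + 1)) (σ : Perm (Fin m)) (hk : k < m) :
    toWord (m + 1) (appendLastEquiv p σ) k
      = toWord m σ k + if p < toWord m σ k then 1 else 0 := by
  rw [toWord_of_lt _ (by omega), toWord_of_lt σ hk,
    show (⟨k, _⟩ : Fin (m + 1)) = Fin.castSucc ⟨k, hk⟩ from rfl,
    appendLastEquiv_apply_castSucc]
  simp only [Fin.succAbove, apply_ite Fin.val, Fin.val_castSucc, Fin.val_succ, Fin.lt_def]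
  split_ifs <;> omega

lemma toWord_appendLast_self {m : ℕ} (p : Fin (m + 1)) (σ : Perm (Fin m)) :
    toWord (m + 1) (appendLastEquiv p σ) m = p + 1 := by
  rw [toWord_last, (appendLastEquiv p σ).2]

lemma bcaCount_appendLast {m : ℕ} (p : Fin (m + 1)) (σ : Perm (Fin m)) :
    bcaCount (toWord (m + 1) (appendLastEquiv p σ)) (m + 1)
      = bcaCount (toWord m σ) m + (toWord m σ (m - 1) - ((p : ℕ) + 1)) := by
  set w := toWord (m + 1) (appendLastEquiv p σ)
  have hw : ∀ k < m, w k = toWord m σ k + if p < toWord m σ k then 1 else 0 :=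
    fun k hk => toWord_appendLast_of_lt p σ hk
  have hwm : w m = p + 1 := toWord_appendLast_self p σ
  have hcount : #{j ∈ range m | w m < w j ∧ w j < w (m - 1)}
      = #{x ∈ range m | (p : ℕ) + 1 ≤ x + 1 ∧ x + 1 < toWord m σ (m - 1)} := by
    rw [← card_filter_toWord m σ fun x => (p : ℕ) + 1 ≤ x ∧ x < toWord m σ (m - 1)]
    refine congrArg card (filter_congr fun j hj => ?_)
    rw [mem_range] at hj
    rw [hwm, hw j hj, hw (m - 1) (by omega)]
    split_ifs <;> omega
  have hIco : {x ∈ range m | (p : ℕ) + 1 ≤ x + 1 ∧ x + 1 < toWord m σ (m - 1)}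
      = Ico (p : ℕ) (toWord m σ (m - 1) - 1) := by
    have := toWord_le m σ (m - 1)
    ext x
    simp only [mem_filter, mem_range, mem_Ico]
    omega
  rw [bcaCount_succ, hcount, hIco, Nat.card_Ico, bcaCount_congr (w' := toWord m σ)
    fun i hi j hj => by rw [hw i hi, hw j hj]; split_ifs <;> omega]
  omega

lemma sum_fiberwise_toWord_last {M : Type*} [AddCommMonoid M] {n : ℕ} (hn : 1 ≤ n)
    (f : Perm (Fin n) → M) :
    ∑ t ∈ Icc 1 n, ∑ π with toWord n π (n - 1) = t, f π = ∑ π, f π :=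
  sum_fiberwise_of_maps_to (fun π _ => toWord_mem_Icc π (by omega)) f

noncomputable def FLast (n t : ℕ) : ℤ[X] :=
  ∑ π : Perm (Fin n) with toWord n π (n - 1) = t, X ^ bcaCount (toWord n π) n

lemma F_eq_sum_FLast {n : ℕ} (hn : 1 ≤ n) : F n = ∑ t ∈ Icc 1 n, FLast n t :=
  (sum_fiberwise_toWord_last hn _).symm

lemma F_zero : F 0 = 1 := by
  simp [F, bcaCount]

lemma FLast_one : FLast 1 1 = 1 := by
  simp [FLast, toWord, bcaCount]

lemma FLast_succ {m t : ℕ} (hm : 1 ≤ m) (ht : t ∈ Icc 1 (m + 1)) :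
    FLast (m + 1) t = ∑ v ∈ Icc 1 m, X ^ (v - t) * FLast m v := by
  obtain ⟨p, rfl⟩ : ∃ p : Fin (m + 1), t = p + 1 := ⟨⟨t - 1, by grind⟩, by grind⟩
  have hfiber : FLast (m + 1) (p + 1) = ∑ π : Perm (Fin (m + 1)) with π (Fin.last m) = p,
      X ^ bcaCount (toWord (m + 1) π) (m + 1) := by
    refine sum_congr (filter_congr fun π _ => ?_) fun _ _ => rfl
    rw [Nat.add_sub_cancel, toWord_last, Nat.add_right_cancel_iff, Fin.val_inj]
  rw [hfiber, sum_filter_apply_last_eq, ← sum_fiberwise_toWord_last hm]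
  refine sum_congr rfl fun v _ => ?_
  rw [FLast, mul_sum]
  refine sum_congr rfl fun σ hσ => ?_
  rw [bcaCount_appendLast, pow_add, mul_comm, (mem_filter.1 hσ).2]

lemma Finset.sum_powersetCard_succ_eq_sum_min {α M : Type*} [LinearOrder α] [AddCommMonoid M]
    (s : Finset α) (k : ℕ) (f : Finset α → M) :
    ∑ S ∈ s.powersetCard (k + 1), f S
      = ∑ t ∈ s, ∑ T ∈ {x ∈ s | t < x}.powersetCard k, f (insert t T) := by
  have hne : ∀ S ∈ s.powersetCard (k + 1), S.Nonempty := fun S hS =>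
    card_pos.1 <| by rw [(mem_powersetCard.1 hS).2]; omega
  rw [sum_sigma']
  refine sum_bij' (fun S hS => ⟨S.min' (hne S hS), S.erase (S.min' (hne S hS))⟩)
    (fun p _ => insert p.1 p.2) (fun S hS => ?_) (fun p hp => ?_) (fun S hS => ?_)
    (fun p hp => ?_) (fun S hS => ?_)
  · obtain ⟨hSs, hcard⟩ := mem_powersetCard.1 hS
    refine mem_sigma.2 ⟨hSs (S.min'_mem (hne S hS)), mem_powersetCard.2 ⟨fun x hx => ?_, ?_⟩⟩
    · obtain ⟨hne', hx⟩ := mem_erase.1 hx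
      exact mem_filter.2 ⟨hSs hx, lt_of_le_of_ne (S.min'_le x hx) hne'.symm⟩
    · rw [card_erase_of_mem (S.min'_mem (hne S hS)), hcard, Nat.add_sub_cancel]
  · obtain ⟨ht, hT⟩ := mem_sigma.1 hp
    obtain ⟨hTs, hcard⟩ := mem_powersetCard.1 hT
    have hnot : p.1 ∉ p.2 := fun h => lt_irrefl _ (mem_filter.1 (hTs h)).2
    refine mem_powersetCard.2 ⟨insert_subset ht fun x hx => (mem_filter.1 (hTs hx)).1, ?_⟩
    rw [card_insert_of_notMem hnot, hcard]
  · exact insert_erase (S.min'_mem (hne S hS))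
  · obtain ⟨ht, hT⟩ := mem_sigma.1 hp
    obtain ⟨hTs, -⟩ := mem_powersetCard.1 hT
    have hmin : (insert p.1 p.2).min' (insert_nonempty _ _) = p.1 :=
      le_antisymm (min'_le _ _ (mem_insert_self _ _))
        (le_min' _ _ _ fun x hx => (mem_insert.1 hx).elim ge_of_eq
          fun hx => (mem_filter.1 (hTs hx)).2.le)
    simp only [hmin]
    rw [erase_insert fun h => lt_irrefl _ (mem_filter.1 (hTs h)).2]
  · rw [insert_erase (S.min'_mem (hne S hS))]

noncomputable def gapProd : List ℕ → ℤ[X]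
  | a :: b :: l => (X ^ (b - a - 1) - 1) * gapProd (b :: l)
  | _ => 1

lemma gapProd_eq_prod_range : ∀ L : List ℕ,
    gapProd L = ∏ j ∈ range (L.length - 1), (X ^ (L.getD (j + 1) 0 - L.getD j 0 - 1) - 1)
  | [] | [_] => rfl
  | a :: b :: l => by
    rw [gapProd, gapProd_eq_prod_range (b :: l)]
    simp only [List.length_cons, Nat.add_sub_cancel]
    rw [prod_range_succ', mul_comm]
    rfl

lemma gapProd_map_add_one : ∀ L : List ℕ, gapProd (L.map (· + 1)) = gapProd L
  | [] | [_] => rfl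
  | a :: b :: l => by
    have ih := gapProd_map_add_one (b :: l)
    rw [List.map_cons] at ih
    rw [List.map_cons, List.map_cons, gapProd, ih, gapProd, Nat.add_sub_add_right]

lemma a_eq_sum_gapProd (n k : ℕ) :
    a n k = ∑ S ∈ (Icc 1 n).powersetCard k, gapProd (S.sort (· ≤ ·)) := by
  refine sum_congr rfl fun S hS => ?_
  rw [gapProd_eq_prod_range, length_sort, (mem_powersetCard.1 hS).2, ← prod_range_reflect]
  refine prod_congr rfl fun j hj => ?_
  rw [mem_range] at hj
  rw [show k - (k - 1 - 1 - j) - 1 = j + 1 by omega, show k - (k - 1 - 1 - j) - 2 = j by omega]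

/-- The sum over the `(k + 1)`-subsets of `Icc t n` with minimum `t`: `k` counts the elements
above `t`. -/
noncomputable def aMin (n k t : ℕ) : ℤ[X] :=
  ∑ S ∈ (Ioc t n).powersetCard k, gapProd ((insert t S).sort (· ≤ ·))

lemma Finset.filter_lt_Icc {α : Type*} [LinearOrder α] [LocallyFiniteOrder α] {a b t : α}
    (ht : t ∈ Icc a b) : {x ∈ Icc a b | t < x} = Ioc t b := by
  ext x
  simp only [mem_filter, mem_Icc, mem_Ioc] at ht ⊢
  exact ⟨fun h => ⟨h.2, h.1.2⟩, fun h => ⟨⟨ht.1.trans h.1.le, h.2⟩, h.1⟩⟩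

lemma Finset.filter_lt_Ioc {α : Type*} [LinearOrder α] [LocallyFiniteOrder α] {a b t : α}
    (ht : t ∈ Ioc a b) : {x ∈ Ioc a b | t < x} = Ioc t b := by
  ext x
  simp only [mem_filter, mem_Ioc] at ht ⊢
  exact ⟨fun h => ⟨h.2, h.1.2⟩, fun h => ⟨⟨ht.1.trans h.1, h.2⟩, h.1⟩⟩

lemma a_succ_eq_sum_aMin (n k : ℕ) : a n (k + 1) = ∑ t ∈ Icc 1 n, aMin n k t := by
  rw [a_eq_sum_gapProd, sum_powersetCard_succ_eq_sum_min]
  exact sum_congr rfl fun t ht => by rw [filter_lt_Icc ht, aMin]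

lemma aMin_zero (n t : ℕ) : aMin n 0 t = 1 := by
  simp [aMin, gapProd]

lemma aMin_add_one (n k t : ℕ) : aMin (n + 1) k (t + 1) = aMin n k t := by
  rw [aMin, ← map_add_right_Ioc t n 1, powersetCard_map, sum_map]
  refine sum_congr rfl fun S _ => ?_
  have hmono : StrictMonoOn (addRightEmbedding 1) ↑(insert t S) := fun x _ y _ h => by simpa
  simp only [RelEmbedding.coe_toEmbedding, mapEmbedding_apply]
  rw [show t + 1 = addRightEmbedding 1 t from rfl, ← map_insert, ← hmono.map_finsetSort]
  exact gapProd_map_add_one _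

lemma gapProd_sort_insert_insert {t u : ℕ} {S : Finset ℕ} (htu : t < u) (hS : ∀ x ∈ S, u < x) :
    gapProd ((insert t (insert u S)).sort (· ≤ ·))
      = (X ^ (u - t - 1) - 1) * gapProd ((insert u S).sort (· ≤ ·)) := by
  have hu : ∀ x ∈ insert u S, t < x := fun x hx =>
    (mem_insert.1 hx).elim (· ▸ htu) fun hx => htu.trans (hS x hx)
  rw [sort_insert _ (fun x hx => (hu x hx).le) fun h => lt_irrefl t (hu t h),
    sort_insert _ (fun x hx => (hS x hx).le) fun h => lt_irrefl u (hS u h), gapProd]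

lemma aMin_succ_succ (m k t : ℕ) :
    aMin (m + 1) (k + 1) t = ∑ v ∈ Icc t m, (X ^ (v - t) - 1) * aMin m k v := calc
  aMin (m + 1) (k + 1) t = ∑ u ∈ Ioc t (m + 1), (X ^ (u - t - 1) - 1) * aMin (m + 1) k u := by
    rw [aMin, sum_powersetCard_succ_eq_sum_min]
    refine sum_congr rfl fun u hu => ?_
    rw [filter_lt_Ioc hu, aMin, mul_sum]
    exact sum_congr rfl fun S hS => gapProd_sort_insert_insert (mem_Ioc.1 hu).1
      fun x hx => (mem_Ioc.1 ((mem_powersetCard.1 hS).1 hx)).1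
  _ = ∑ v ∈ Icc t m, (X ^ (v - t) - 1) * aMin m k v := by
    rw [← Icc_add_one_left_eq_Ioc, ← map_add_right_Icc t m 1, sum_map]
    refine sum_congr rfl fun v _ => ?_
    rw [addRightEmbedding_apply, aMin_add_one, show v + 1 - t - 1 = v - t by omega]

lemma FLast_eq_sum_aMin_mul_F {n : ℕ} (hn : 1 ≤ n) :
    ∀ t ∈ Icc 1 n, FLast n t = ∑ k ∈ range n, aMin n k t * F (n - 1 - k) := by
  induction n, hn using Nat.le_induction with
  | base =>
    intro t ht
    obtain rfl : t = 1 := by simp only [mem_Icc] at ht; omega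
    rw [FLast_one, sum_range_one, aMin_zero, F_zero, mul_one]
  | succ m hm ih =>
    intro t ht
    have hvanish : ∀ v ∈ Icc 1 m, v ∉ Icc t m → (X ^ (v - t) - 1 : ℤ[X]) * FLast m v = 0 :=
      fun v hv hv' => by
        rw [Nat.sub_eq_zero_of_le (by simp only [mem_Icc] at hv hv'; omega), pow_zero, sub_self,
          zero_mul]
    calc FLast (m + 1) t = ∑ v ∈ Icc 1 m, X ^ (v - t) * FLast m v := FLast_succ hm ht
      _ = F m + ∑ v ∈ Icc t m, (X ^ (v - t) - 1) * FLast m v := by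
        rw [F_eq_sum_FLast hm, sum_subset (Icc_subset_Icc_left (mem_Icc.1 ht).1) hvanish,
          ← sum_add_distrib]
        exact sum_congr rfl fun v _ => by ring
      _ = F m + ∑ k ∈ range m, aMin (m + 1) (k + 1) t * F (m - 1 - k) := by
        simp_rw [aMin_succ_succ, sum_mul]
        rw [sum_comm]
        refine congrArg _ (sum_congr rfl fun v hv => ?_)
        rw [ih v (Icc_subset_Icc_left (mem_Icc.1 ht).1 hv), mul_sum]
        exact sum_congr rfl fun k _ => by ring
      _ = ∑ k ∈ range (m + 1), aMin (m + 1) k t * F (m + 1 - 1 - k) := by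
        rw [sum_range_succ', aMin_zero, add_comm]
        simp only [Nat.add_sub_cancel, Nat.sub_zero, one_mul, Nat.sub_add_eq,
          Nat.sub_right_comm m 1]

lemma Icc_one_eq_map_range (n : ℕ) : Icc 1 n = (range n).map (addRightEmbedding 1) := by
  rw [range_eq_Ico, map_add_right_Ico, zero_add, Ico_add_one_right_eq_Icc]

theorem bca_distribution_recurrence :
    F 0 = 1 ∧ ∀ n, 1 ≤ n → F n = ∑ k ∈ Icc 1 n, a n k * F (n - k) := by
  refine ⟨F_zero, fun n hn => ?_⟩
  rw [F_eq_sum_FLast hn, sum_congr rfl (FLast_eq_sum_aMin_mul_F hn), sum_comm]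
  conv_rhs => rw [Icc_one_eq_map_range, sum_map]
  refine sum_congr rfl fun k _ => ?_
  rw [← sum_mul, ← a_succ_eq_sum_aMin, addRightEmbedding_apply, Nat.sub_sub, add_comm 1 k]
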